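/- arXiv:2510.15734 — 3 statements merged into one kernel-verified Lean document; each statement's English description precedes it below -/
import Mathlib

section
/- Let f : ℝ^n → ℝ be convex and differentiable with L-Lipschitz continuous gradient (L > 0), and let x* be a global minimizer of f. If x⁺ = x − (1/L)∇f(x), then f(x⁺) ≤ f(x*) + (L/2)(‖x − x*‖² − ‖x⁺ − x*‖²). -/
/-!
The descent lemma `f (x + v) ≤ f x + ⟪∇f x, v⟫ + L/2 ‖v‖²` gives
`f x⁺ ≤ f x - ‖∇f x‖² / (2L)`, and convexity gives `f x ≤ f x* + ⟪∇f x, x - x*⟫`.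
Expanding `‖x⁺ - x*‖² = ‖(x - x*) - L⁻¹ ∇f x‖²` shows that the sum of these two right-hand
sides is exactly `f x* + L/2 (‖x - x*‖² - ‖x⁺ - x*‖²)`.
-/

open RealInnerProductSpace

section LipschitzGradient

variable {E : Type*} [NormedAddCommGroup E] [InnerProductSpace ℝ E] {f : E → ℝ} {f' : E → E}
  {L : ℝ}

theorem hasDerivAt_comp_add_smul_of_hasGradientAt [CompleteSpace E]
    (hdiff : ∀ x, HasGradientAt f (f' x) x) (x v : E) (t : ℝ) :
    HasDerivAt (fun t : ℝ => f (x + t • v)) ⟪f' (x + t • v), v⟫ t := by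
  have hline : HasDerivAt (fun t : ℝ => x + t • v) v t := by
    simpa using ((hasDerivAt_id t).smul_const v).const_add x
  have h := (hdiff (x + t • v)).hasFDerivAt.comp_hasDerivAt t hline
  rw [InnerProductSpace.toDual_apply_apply] at h
  exact h

theorem inner_apply_add_smul_le_of_lipschitz (hlip : ∀ x y, ‖f' x - f' y‖ ≤ L * ‖x - y‖)
    (x v : E) {t : ℝ} (ht : 0 ≤ t) :
    ⟪f' (x + t • v), v⟫ ≤ ⟪f' x, v⟫ + L * t * ‖v‖ ^ 2 := by
  have hgap : ‖f' (x + t • v) - f' x‖ ≤ L * t * ‖v‖ := by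
    simpa [norm_smul, abs_of_nonneg ht, mul_assoc] using hlip (x + t • v) x
  calc ⟪f' (x + t • v), v⟫ = ⟪f' x, v⟫ + ⟪f' (x + t • v) - f' x, v⟫ := by
        rw [inner_sub_left]; ring
    _ ≤ ⟪f' x, v⟫ + ‖f' (x + t • v) - f' x‖ * ‖v‖ := by gcongr; exact real_inner_le_norm _ _
    _ ≤ ⟪f' x, v⟫ + L * t * ‖v‖ * ‖v‖ := by gcongr
    _ = ⟪f' x, v⟫ + L * t * ‖v‖ ^ 2 := by ring

theorem descent_lemma [CompleteSpace E] (hdiff : ∀ x, HasGradientAt f (f' x) x)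
    (hlip : ∀ x y, ‖f' x - f' y‖ ≤ L * ‖x - y‖) (x v : E) :
    f (x + v) ≤ f x + ⟪f' x, v⟫ + L / 2 * ‖v‖ ^ 2 := by
  have hf (t : ℝ) := hasDerivAt_comp_add_smul_of_hasGradientAt hdiff x v t
  -- the quadratic model whose derivative dominates that of `t ↦ f (x + t • v)` on `[0, 1]`
  have hB (t : ℝ) : HasDerivAt (fun t : ℝ => f x + t * ⟪f' x, v⟫ + L / 2 * ‖v‖ ^ 2 * t ^ 2)
      (⟪f' x, v⟫ + L * t * ‖v‖ ^ 2) t := by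
    refine ((((hasDerivAt_id t).mul_const ⟪f' x, v⟫).const_add (f x)).add
      ((hasDerivAt_pow 2 t).const_mul (L / 2 * ‖v‖ ^ 2))).congr_deriv ?_
    ring
  have hcompare := image_le_of_deriv_right_le_deriv_boundary (a := 0) (b := 1)
    (fun t _ => (hf t).continuousAt.continuousWithinAt) (fun t _ => (hf t).hasDerivWithinAt)
    (by simp) (fun t _ => (hB t).continuousAt.continuousWithinAt)
    (fun t _ => (hB t).hasDerivWithinAt)
    (fun t ht => inner_apply_add_smul_le_of_lipschitz hlip x v ht.1)
    (Set.right_mem_Icc.2 zero_le_one)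
  simpa using hcompare

theorem apply_gradient_step_le [CompleteSpace E] (hdiff : ∀ x, HasGradientAt f (f' x) x)
    (hlip : ∀ x y, ‖f' x - f' y‖ ≤ L * ‖x - y‖) (x : E) :
    f (x - (1 / L) • f' x) ≤ f x - ‖f' x‖ ^ 2 / (2 * L) := by
  have h := descent_lemma hdiff hlip x (-((1 / L) • f' x))
  rw [← sub_eq_add_neg, inner_neg_right, real_inner_smul_right, real_inner_self_eq_norm_sq,
    norm_neg, norm_smul, Real.norm_eq_abs, mul_pow, sq_abs] at h
  convert h using 1
  rcases eq_or_ne L 0 with rfl | hL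
  · simp
  · field_simp
    ring

theorem half_mul_norm_sq_sub_norm_sq_sub_smul (hL : L ≠ 0) (d g : E) :
    L / 2 * (‖d‖ ^ 2 - ‖d - (1 / L) • g‖ ^ 2) = ⟪g, d⟫ - ‖g‖ ^ 2 / (2 * L) := by
  rw [norm_sub_sq_real, real_inner_smul_right, norm_smul, Real.norm_eq_abs, mul_pow, sq_abs,
    real_inner_comm]
  field_simp
  ring

end LipschitzGradient

theorem gradient_step_convex_bound_general
    (n : ℕ) (f : EuclideanSpace ℝ (Fin n) → ℝ)
    (f' : EuclideanSpace ℝ (Fin n) → EuclideanSpace ℝ (Fin n))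
    (L : ℝ) (hL : 0 < L)
    (hdiff : ∀ x, HasGradientAt f (f' x) x)
    (hlip : ∀ x y, ‖f' x - f' y‖ ≤ L * ‖x - y‖)
    (hconvex : ∀ x s, f x + ⟪f' x, s⟫ ≤ f (x + s))
    (xstar : EuclideanSpace ℝ (Fin n))
    (x xplus : EuclideanSpace ℝ (Fin n))
    (hstep : xplus = x - (1 / L) • f' x) :
    f xplus ≤ f xstar + L / 2 * (‖x - xstar‖ ^ 2 - ‖xplus - xstar‖ ^ 2) := by
  have hdecrease : f xplus ≤ f x - ‖f' x‖ ^ 2 / (2 * L) :=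
    hstep ▸ apply_gradient_step_le hdiff hlip x
  have hsupport : f x - ⟪f' x, x - xstar⟫ ≤ f xstar := by
    have h := hconvex x (-(x - xstar))
    rwa [inner_neg_right, ← sub_eq_add_neg, ← sub_eq_add_neg, sub_sub_cancel] at h
  have hdist : xplus - xstar = (x - xstar) - (1 / L) • f' x := by
    rw [hstep]; abel
  rw [hdist, half_mul_norm_sq_sub_norm_sq_sub_smul hL.ne']
  linarith

theorem gradient_step_convex_bound
    (n : ℕ) (f : EuclideanSpace ℝ (Fin n) → ℝ)
    (f' : EuclideanSpace ℝ (Fin n) → EuclideanSpace ℝ (Fin n))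
    (L : ℝ) (hL : 0 < L)
    (hdiff : ∀ x, HasGradientAt f (f' x) x)
    (hlip : ∀ x y, ‖f' x - f' y‖ ≤ L * ‖x - y‖)
    (hconvex : ∀ x s, f x + ⟪f' x, s⟫ ≤ f (x + s))
    (xstar : EuclideanSpace ℝ (Fin n)) (hmin : ∀ x, f xstar ≤ f x)
    (x xplus : EuclideanSpace ℝ (Fin n))
    (hstep : xplus = x - (1 / L) • f' x) :
    f xplus ≤ f xstar + L / 2 * (‖x - xstar‖ ^ 2 - ‖xplus - xstar‖ ^ 2) :=
  gradient_step_convex_bound_general n f f' L hL hdiff hlip hconvex xstar x xplus hstep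
end

section
/- Let f : ℝ^n → ℝ be differentiable with L-Lipschitz continuous gradient and strongly convex with modulus μ > 0 (so f(x+s) ≥ f(x) + ⟨∇f(x), s⟩ + (μ/2)‖s‖² for all x, s), with L ≥ μ, and let x* be the global minimizer of f. Let (x^k) be generated by x^{k+1} = x^k − (1/L)∇f(x^k). Then for every positive integer T, f(x^T) − f(x*) ≤ (1 − μ/L)^T (f(x⁰) − f(x*)). -/
/-!
The Lipschitz gradient bounds `f` above by its quadratic model with curvature `L` (the descent
lemma), so a step of length `1 / L` decreases `f` by at least `‖∇f(x)‖² / (2L)`. Minimizing the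
strong convexity lower bound over `s` gives the Polyak–Łojasiewicz inequality
`2μ (f x - f y) ≤ ‖∇f(x)‖²` for every `y`, so each step multiplies the gap `f (x k) - f x⋆` by at
most `1 - μ / L`.
-/

open RealInnerProductSpace

section

variable {E : Type*} [NormedAddCommGroup E] [InnerProductSpace ℝ E] {f : E → ℝ} {f' : E → E}
  {L μ : ℝ}

theorem two_mul_sub_le_norm_sq_of_strongly_convex (hμ : 0 ≤ μ)
    (hstrong : ∀ x s, f x + ⟪f' x, s⟫ + μ / 2 * ‖s‖ ^ 2 ≤ f (x + s)) (x y : E) :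
    2 * μ * (f x - f y) ≤ ‖f' x‖ ^ 2 := by
  have h := hstrong x (y - x)
  rw [add_sub_cancel] at h
  have hcs := neg_le_of_abs_le (abs_real_inner_le_norm (f' x) (y - x))
  nlinarith [sq_nonneg (‖f' x‖ - μ * ‖y - x‖), norm_nonneg (f' x), norm_nonneg (y - x)]

variable [CompleteSpace E]

theorem le_add_inner_add_sq_of_lipschitz_gradient (hdiff : ∀ x, HasGradientAt f (f' x) x)
    (hlip : ∀ x y, ‖f' x - f' y‖ ≤ L * ‖x - y‖) (x v : E) :
    f (x + v) ≤ f x + ⟪f' x, v⟫ + L / 2 * ‖v‖ ^ 2 := by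
  -- `φ' ≤ 0` on `[0, ∞)` by the Lipschitz bound, and `φ 1 ≤ φ 0` is the claim.
  set φ : ℝ → ℝ := fun t ↦ f (x + t • v) - t * ⟪f' x, v⟫ - L / 2 * t ^ 2 * ‖v‖ ^ 2
  have hφ : ∀ t, HasDerivAt φ (⟪f' (x + t • v), v⟫ - ⟪f' x, v⟫ - L * t * ‖v‖ ^ 2) t := by
    intro t
    have hline : HasDerivAt (fun t : ℝ ↦ x + t • v) v t := by
      simpa using ((hasDerivAt_id t).smul_const v).const_add x
    have hcomp : HasDerivAt (fun t : ℝ ↦ f (x + t • v)) ⟪f' (x + t • v), v⟫ t :=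
      (hdiff _).hasFDerivAt.comp_hasDerivAt t hline
    have hquad := ((hasDerivAt_pow 2 t).const_mul (L / 2)).mul_const (‖v‖ ^ 2)
    refine ((hcomp.sub ((hasDerivAt_id t).mul_const _)).sub hquad).congr_deriv ?_
    simp only [Nat.cast_ofNat, Nat.add_one_sub_one, pow_one]
    ring
  have hanti : AntitoneOn φ (Set.Ici 0) := by
    refine antitoneOn_of_hasDerivWithinAt_nonpos (convex_Ici 0)
      (fun t _ ↦ (hφ t).continuousAt.continuousWithinAt) (fun t _ ↦ (hφ t).hasDerivWithinAt) ?_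
    intro t ht
    rw [interior_Ici, Set.mem_Ioi] at ht
    have hgrad : ‖f' (x + t • v) - f' x‖ ≤ L * (t * ‖v‖) := by
      simpa [norm_smul, abs_of_pos ht] using hlip (x + t • v) x
    calc ⟪f' (x + t • v), v⟫ - ⟪f' x, v⟫ - L * t * ‖v‖ ^ 2
        = ⟪f' (x + t • v) - f' x, v⟫ - L * t * ‖v‖ ^ 2 := by rw [inner_sub_left]
      _ ≤ ‖f' (x + t • v) - f' x‖ * ‖v‖ - L * t * ‖v‖ ^ 2 := by
          gcongr; exact real_inner_le_norm _ _
      _ ≤ 0 := by nlinarith [mul_le_mul_of_nonneg_right hgrad (norm_nonneg v)]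
  have h01 := hanti Set.self_mem_Ici (Set.mem_Ici.2 zero_le_one) zero_le_one
  simp only [φ, one_smul, zero_smul, add_zero] at h01
  linarith

theorem gradient_step_le (hL : 0 < L) (hdiff : ∀ x, HasGradientAt f (f' x) x)
    (hlip : ∀ x y, ‖f' x - f' y‖ ≤ L * ‖x - y‖) (x : E) :
    f (x - (1 / L) • f' x) ≤ f x - ‖f' x‖ ^ 2 / (2 * L) := by
  have h := le_add_inner_add_sq_of_lipschitz_gradient hdiff hlip x (-((1 / L) • f' x))
  rw [← sub_eq_add_neg, inner_neg_right, real_inner_smul_right, real_inner_self_eq_norm_sq,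
    norm_neg, norm_smul, mul_pow, Real.norm_eq_abs, sq_abs] at h
  convert h using 1
  field_simp
  ring

theorem gradient_step_sub_le (hL : 0 < L) (hμ : 0 ≤ μ) (hdiff : ∀ x, HasGradientAt f (f' x) x)
    (hlip : ∀ x y, ‖f' x - f' y‖ ≤ L * ‖x - y‖)
    (hstrong : ∀ x s, f x + ⟪f' x, s⟫ + μ / 2 * ‖s‖ ^ 2 ≤ f (x + s)) (x y : E) :
    f (x - (1 / L) • f' x) - f y ≤ (1 - μ / L) * (f x - f y) := by
  have hstep := gradient_step_le hL hdiff hlip x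
  have hpl := two_mul_sub_le_norm_sq_of_strongly_convex hμ hstrong x y
  have hdiv : μ / L * (f x - f y) ≤ ‖f' x‖ ^ 2 / (2 * L) := by
    rw [div_mul_eq_mul_div, div_le_div_iff₀ hL (by positivity)]
    nlinarith
  nlinarith

end

theorem gradient_descent_strongly_convex_rate_general
    (n : ℕ) (f : EuclideanSpace ℝ (Fin n) → ℝ)
    (f' : EuclideanSpace ℝ (Fin n) → EuclideanSpace ℝ (Fin n))
    (L μ : ℝ) (hμ : 0 < μ) (hLμ : μ ≤ L)
    (hdiff : ∀ x, HasGradientAt f (f' x) x)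
    (hlip : ∀ x y, ‖f' x - f' y‖ ≤ L * ‖x - y‖)
    (hstrong : ∀ x s, f x + ⟪f' x, s⟫ + μ / 2 * ‖s‖ ^ 2 ≤ f (x + s))
    (xstar : EuclideanSpace ℝ (Fin n))
    (x : ℕ → EuclideanSpace ℝ (Fin n))
    (hiter : ∀ k, x (k + 1) = x k - (1 / L) • f' (x k))
    (T : ℕ) :
    f (x T) - f xstar ≤ (1 - μ / L) ^ T * (f (x 0) - f xstar) := by
  have hL : 0 < L := hμ.trans_le hLμ
  have hrate : 0 ≤ 1 - μ / L := sub_nonneg.2 ((div_le_one hL).2 hLμ)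
  refine le_geom (u := fun k ↦ f (x k) - f xstar) hrate T fun k _ ↦ ?_
  simpa only [hiter k] using gradient_step_sub_le hL hμ.le hdiff hlip hstrong (x k) xstar

theorem gradient_descent_strongly_convex_rate
    (n : ℕ) (f : EuclideanSpace ℝ (Fin n) → ℝ)
    (f' : EuclideanSpace ℝ (Fin n) → EuclideanSpace ℝ (Fin n))
    (L μ : ℝ) (hμ : 0 < μ) (hLμ : μ ≤ L)
    (hdiff : ∀ x, HasGradientAt f (f' x) x)
    (hlip : ∀ x y, ‖f' x - f' y‖ ≤ L * ‖x - y‖)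
    (hstrong : ∀ x s, f x + ⟪f' x, s⟫ + μ / 2 * ‖s‖ ^ 2 ≤ f (x + s))
    (xstar : EuclideanSpace ℝ (Fin n)) (hmin : ∀ x, f xstar ≤ f x)
    (x : ℕ → EuclideanSpace ℝ (Fin n))
    (hiter : ∀ k, x (k + 1) = x k - (1 / L) • f' (x k))
    (T : ℕ) (hT : 0 < T) :
    f (x T) - f xstar ≤ (1 - μ / L) ^ T * (f (x 0) - f xstar) :=
  gradient_descent_strongly_convex_rate_general n f f' L μ hμ hLμ hdiff hlip hstrong xstar x hiter T
end

section
/- Let H be a real symmetric positive semidefinite n×n matrix and g ∈ ℝ^n, and define f(x) = (1/2)xᵀHx + gᵀx. Then f attains a global minimum on ℝ^n if and only if gᵀs = 0 for every s ∈ ℝ^n with Hs = 0 (equivalently, for every s with sᵀHs = 0); and if this condition fails, f is unbounded below. -/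
/-!
If `s ∈ ker H` and `gᵀs ≠ 0`, then `f` is linear and nonconstant along the line `ℝ s`, so it is
unbounded below and has no minimum. Conversely, for symmetric `H` the range of `H` is the
orthogonal complement of its kernel, so `g ⊥ ker H` gives `x₀` with `H x₀ = -g`; completing the
square, `f x - f x₀ = ½ (x - x₀)ᵀ H (x - x₀) ≥ 0`.
-/

open Matrix

theorem Matrix.IsSymm.dotProduct_mulVec_comm {ι α : Type*} [Fintype ι] [CommSemiring α]
    {H : Matrix ι ι α} (hH : H.IsSymm) (x y : ι → α) : x ⬝ᵥ H *ᵥ y = y ⬝ᵥ H *ᵥ x := by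
  rw [dotProduct_mulVec, ← mulVec_transpose, hH.eq, dotProduct_comm]

theorem Matrix.IsHermitian.exists_mulVec_eq_of_orthogonal_ker {ι 𝕜 : Type*} [Fintype ι]
    [DecidableEq ι] [RCLike 𝕜] {H : Matrix ι ι 𝕜} (hH : H.IsHermitian) {g : ι → 𝕜}
    (hg : ∀ s, H *ᵥ s = 0 → star s ⬝ᵥ g = 0) : ∃ x, H *ᵥ x = g := by
  have hg' : WithLp.toLp 2 g ∈ (LinearMap.ker H.toEuclideanLin)ᗮ := by
    rw [Submodule.mem_orthogonal]
    intro s hs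
    have := hg s.ofLp (by simpa using congrArg WithLp.ofLp hs)
    simpa [EuclideanSpace.inner_eq_star_dotProduct, dotProduct_comm] using this
  rw [← (isSymmetric_toEuclideanLin_iff.mpr hH).orthogonal_range,
    Submodule.orthogonal_orthogonal] at hg'
  obtain ⟨x, hx⟩ := hg'
  exact ⟨x.ofLp, by simpa using congrArg WithLp.ofLp hx⟩

section QuadraticObjective

variable {ι : Type*} [Fintype ι] {H : Matrix ι ι ℝ} {g : ι → ℝ}

noncomputable def quadraticObjective (H : Matrix ι ι ℝ) (g : ι → ℝ) (x : ι → ℝ) : ℝ :=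
  1 / 2 * (x ⬝ᵥ H *ᵥ x) + g ⬝ᵥ x

theorem quadraticObjective_smul_of_mulVec_eq_zero {s : ι → ℝ} (hs : H *ᵥ s = 0) (t : ℝ) :
    quadraticObjective H g (t • s) = t * (g ⬝ᵥ s) := by
  simp [quadraticObjective, mulVec_smul, hs]

theorem exists_quadraticObjective_lt {s : ι → ℝ} (hs : H *ᵥ s = 0) (hgs : g ⬝ᵥ s ≠ 0)
    (M : ℝ) : ∃ x, quadraticObjective H g x < M :=
  ⟨((M - 1) / (g ⬝ᵥ s)) • s, by
    rw [quadraticObjective_smul_of_mulVec_eq_zero hs, div_mul_cancel₀ _ hgs]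
    linarith⟩

theorem quadraticObjective_sub_of_mulVec_eq_neg (hH : H.IsSymm) {x₀ : ι → ℝ}
    (hx₀ : H *ᵥ x₀ = -g) (x : ι → ℝ) :
    quadraticObjective H g x - quadraticObjective H g x₀ =
      1 / 2 * ((x - x₀) ⬝ᵥ H *ᵥ (x - x₀)) := by
  have hg : ∀ y, g ⬝ᵥ y = -(x₀ ⬝ᵥ H *ᵥ y) := fun y => by
    rw [hH.dotProduct_mulVec_comm, dotProduct_comm, hx₀, dotProduct_neg, neg_neg]
  simp only [quadraticObjective, hg, mulVec_sub, sub_dotProduct, dotProduct_sub,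
    hH.dotProduct_mulVec_comm x x₀]
  ring

theorem quadraticObjective_le_of_mulVec_eq_neg (hH : H.IsSymm)
    (hpsd : ∀ x : ι → ℝ, 0 ≤ x ⬝ᵥ H *ᵥ x) {x₀ : ι → ℝ} (hx₀ : H *ᵥ x₀ = -g) (x : ι → ℝ) :
    quadraticObjective H g x₀ ≤ quadraticObjective H g x := by
  have := quadraticObjective_sub_of_mulVec_eq_neg hH hx₀ x
  nlinarith [hpsd (x - x₀)]

end QuadraticObjective

theorem quadratic_psd_minimum_iff
    (n : ℕ) (H : Matrix (Fin n) (Fin n) ℝ) (hH : H.IsSymm)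
    (hpsd : ∀ x : Fin n → ℝ, 0 ≤ x ⬝ᵥ H.mulVec x)
    (g : Fin n → ℝ)
    (f : (Fin n → ℝ) → ℝ)
    (hf : ∀ x, f x = 1 / 2 * (x ⬝ᵥ H.mulVec x) + g ⬝ᵥ x) :
    ((∃ xstar : Fin n → ℝ, ∀ x, f xstar ≤ f x) ↔
      (∀ s : Fin n → ℝ, H.mulVec s = 0 → g ⬝ᵥ s = 0)) ∧
    (¬ (∀ s : Fin n → ℝ, H.mulVec s = 0 → g ⬝ᵥ s = 0) →
      ∀ M : ℝ, ∃ x : Fin n → ℝ, f x < M) := by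
  obtain rfl : f = quadraticObjective H g := funext hf
  have unbounded : ¬ (∀ s : Fin n → ℝ, H *ᵥ s = 0 → g ⬝ᵥ s = 0) →
      ∀ M, ∃ x, quadraticObjective H g x < M := by
    push Not
    rintro ⟨s, hs, hgs⟩
    exact exists_quadraticObjective_lt hs hgs
  refine ⟨⟨fun ⟨xstar, hmin⟩ => ?_, fun h => ?_⟩, unbounded⟩
  · by_contra hg
    obtain ⟨x, hx⟩ := unbounded hg (quadraticObjective H g xstar)
    exact (hmin x).not_gt hx
  · obtain ⟨x₀, hx₀⟩ :=
      (isHermitian_iff_isSymm.mpr hH).exists_mulVec_eq_of_orthogonal_ker (g := -g)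
        fun s hs => by rw [star_trivial, dotProduct_neg, dotProduct_comm, h s hs, neg_zero]
    exact ⟨x₀, quadraticObjective_le_of_mulVec_eq_neg hH hpsd hx₀⟩
end
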